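/- arXiv:2403.17751 — 2 statements merged into one kernel-verified Lean document; each statement's English description precedes it below -/
import Mathlib

section
/- Let K₀ denote the modified Bessel function of the second kind of order zero, defined for y > 0 by K₀(y) = ∫_0^∞ exp(-y cosh t) dt. Then ∫_0^∞ 4x·K₀(2x) dx = 1; in particular, x ↦ 4x·K₀(2x) is a probability density on (0,∞). -/
open Real MeasureTheory Set

/-- The modified Bessel function of the second kind of order zero,
`K₀(y) = ∫_0^∞ exp(-y cosh t) dt`. -/
noncomputable def besselK0 (y : ℝ) : ℝ :=
  ∫ t in Ioi (0 : ℝ), Real.exp (-y * Real.cosh t)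

/-!
Expanding `K₀` as an integral and swapping the order of integration (the integrand is positive),
the inner integral is `∫_0^∞ x e^{-a x cosh t} dx = 1 / (a cosh t)²`, and
`∫_0^∞ dt / cosh² t = [tanh t]_0^∞ = 1`. Hence `∫_0^∞ x K₀(a x) dx = 1 / a²`,
which is `1/4` at `a = 2`.
-/

open Filter Topology

namespace Real

theorem hasDerivAt_tanh (t : ℝ) : HasDerivAt tanh ((cosh t ^ 2)⁻¹) t := by
  have h := (hasDerivAt_sinh t).div (hasDerivAt_cosh t) (cosh_pos t).ne'
  rw [← sq, ← sq, cosh_sq_sub_sinh_sq, one_div] at h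
  rwa [show tanh = sinh / cosh from funext tanh_eq_sinh_div_cosh]

theorem tanh_eq_one_sub_exp_div_one_add_exp (t : ℝ) :
    tanh t = (1 - exp (-(2 * t))) / (1 + exp (-(2 * t))) := by
  have h2t : exp (-(2 * t)) = exp (-t) * exp (-t) := by rw [← exp_add]; ring_nf
  have ht : exp t * exp (-t) = 1 := by rw [← exp_add, add_neg_cancel, exp_zero]
  rw [tanh_eq_sinh_div_cosh, sinh_eq, cosh_eq, h2t, div_eq_div_iff (by positivity) (by positivity)]
  linear_combination exp (-t) * ht

theorem tendsto_tanh_atTop : Tendsto tanh atTop (𝓝 1) := by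
  have h : Tendsto (fun t : ℝ => exp (-(2 * t))) atTop (𝓝 0) :=
    tendsto_exp_neg_atTop_nhds_zero.comp (tendsto_id.const_mul_atTop two_pos)
  have hlim := ((tendsto_const_nhds (x := (1 : ℝ))).sub h).div
    ((tendsto_const_nhds (x := (1 : ℝ))).add h) (by norm_num)
  rw [sub_zero, add_zero, div_one] at hlim
  rw [funext tanh_eq_one_sub_exp_div_one_add_exp]
  exact hlim

end Real

theorem integral_inv_cosh_sq_Ioi : ∫ t in Ioi (0 : ℝ), (cosh t ^ 2)⁻¹ = 1 := by
  rw [integral_Ioi_of_hasDerivAt_of_nonneg' (fun t _ => hasDerivAt_tanh t)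
    (fun t _ => by positivity) tendsto_tanh_atTop, tanh_zero, sub_zero]

theorem integrableOn_inv_cosh_sq_Ioi : IntegrableOn (fun t => (cosh t ^ 2)⁻¹) (Ioi (0 : ℝ)) :=
  integrableOn_Ioi_deriv_of_nonneg' (fun t _ => hasDerivAt_tanh t) (fun t _ => by positivity)
    tendsto_tanh_atTop

section ExpMoment

variable {b : ℝ}

theorem integrableOn_mul_exp_neg_mul_Ioi (hb : 0 < b) :
    IntegrableOn (fun x => x * exp (-(b * x))) (Ioi (0 : ℝ)) := by
  refine IntegrableOn.congr_fun
    (integrableOn_rpow_mul_exp_neg_mul_rpow (p := 1) (s := 1) (by norm_num) one_pos hb)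
    (fun x _ => ?_) measurableSet_Ioi
  simp only [rpow_one, neg_mul]

theorem integral_mul_exp_neg_mul_Ioi (hb : 0 < b) :
    ∫ x in Ioi (0 : ℝ), x * exp (-(b * x)) = (b ^ 2)⁻¹ := by
  have h := integral_rpow_mul_exp_neg_mul_Ioi two_pos hb
  norm_num [Gamma_two] at h
  exact h

end ExpMoment

section BesselMoment

variable {a : ℝ}

theorem integral_mul_exp_neg_mul_mul_cosh_Ioi (ha : 0 < a) (t : ℝ) :
    ∫ x in Ioi (0 : ℝ), x * exp (-(a * x) * cosh t) = (a ^ 2)⁻¹ * (cosh t ^ 2)⁻¹ := by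
  have h := integral_mul_exp_neg_mul_Ioi (mul_pos ha (cosh_pos t))
  rw [mul_pow, mul_inv] at h
  rw [← h]
  congr with x
  ring_nf

theorem integrable_mul_exp_neg_mul_mul_cosh (ha : 0 < a) :
    Integrable (Function.uncurry fun x t => x * exp (-(a * x) * cosh t))
      ((volume.restrict (Ioi (0 : ℝ))).prod (volume.restrict (Ioi (0 : ℝ)))) := by
  have hmeas : AEStronglyMeasurable (Function.uncurry fun x t => x * exp (-(a * x) * cosh t))
      ((volume.restrict (Ioi (0 : ℝ))).prod (volume.restrict (Ioi (0 : ℝ)))) :=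
    (by fun_prop : Continuous _).aestronglyMeasurable
  refine (integrable_prod_iff' hmeas).2 ⟨Eventually.of_forall fun t => ?_, ?_⟩
  · refine (integrableOn_mul_exp_neg_mul_Ioi (mul_pos ha (cosh_pos t))).congr_fun
      (fun x _ => ?_) measurableSet_Ioi
    simp only [Function.uncurry_apply_pair]
    ring_nf
  · refine IntegrableOn.congr_fun (integrableOn_inv_cosh_sq_Ioi.const_mul (a ^ 2)⁻¹)
      (fun t _ => ?_) measurableSet_Ioi
    rw [← integral_mul_exp_neg_mul_mul_cosh_Ioi ha t]
    refine setIntegral_congr_fun measurableSet_Ioi fun x (hx : 0 < x) => ?_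
    exact (norm_of_nonneg (by positivity)).symm

theorem integral_mul_besselK0_mul_Ioi (ha : 0 < a) :
    ∫ x in Ioi (0 : ℝ), x * besselK0 (a * x) = (a ^ 2)⁻¹ :=
  calc ∫ x in Ioi (0 : ℝ), x * besselK0 (a * x)
      = ∫ x in Ioi (0 : ℝ), ∫ t in Ioi (0 : ℝ), x * exp (-(a * x) * cosh t) := by
        simp only [besselK0, integral_const_mul]
    _ = ∫ t in Ioi (0 : ℝ), ∫ x in Ioi (0 : ℝ), x * exp (-(a * x) * cosh t) :=
        integral_integral_swap (integrable_mul_exp_neg_mul_mul_cosh ha)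
    _ = ∫ t in Ioi (0 : ℝ), (a ^ 2)⁻¹ * (cosh t ^ 2)⁻¹ := by
        simp only [integral_mul_exp_neg_mul_mul_cosh_Ioi ha]
    _ = (a ^ 2)⁻¹ := by rw [integral_const_mul, integral_inv_cosh_sq_Ioi, mul_one]

end BesselMoment

/-- `∫_0^∞ 4x·K₀(2x) dx = 1`: `x ↦ 4x·K₀(2x)` is a probability density on `(0,∞)`. -/
theorem double_rayleigh_density_integral :
    (∫ x in Ioi (0 : ℝ), 4 * x * besselK0 (2 * x)) = 1 := by
  simp only [mul_assoc, integral_const_mul, integral_mul_besselK0_mul_Ioi two_pos]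
  norm_num
end

section
/- Fix real N > 0, channel correlation coefficient ξ with 0 < ξ ≤ 1, channel estimation error variance σ_e² ≥ 0, residual loop-interference level k² ≥ 0, SNR ρ > 0, and outage threshold γ > 0. Let X be a real Gaussian random variable with mean μ = Nπ/4 and variance σ² = N(32-π²)/16, and let Q(x) = (1/√(2π))·∫_x^∞ exp(-t²/2) dt. Set z = ((ρ(1-ξ²)Nσ_e² + ρk² + 1)/(ρξ²))·γ. Then the outage probability P( ρξ²·X² / (ρ(1-ξ²)Nσ_e² + ρk² + 1) ≤ γ ) equals 1 - Q((√z - μ)/σ) - Q((√z + μ)/σ). -/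
open Real MeasureTheory ProbabilityTheory Set

noncomputable def gaussQ (x : ℝ) : ℝ :=
  (1 / Real.sqrt (2 * π)) * ∫ t in Ioi x, Real.exp (-t ^ 2 / 2)

lemma stdf_eq : (fun t : ℝ => Real.exp (-t ^ 2 / 2)) = fun t => Real.exp (-(1/2 : ℝ) * t ^ 2) := by
  funext t; ring_nf

lemma integrable_stdf : Integrable (fun t : ℝ => Real.exp (-t ^ 2 / 2)) := by
  rw [stdf_eq]; exact integrable_exp_neg_mul_sq (by norm_num)

lemma integral_stdf : ∫ t : ℝ, Real.exp (-t ^ 2 / 2) = Real.sqrt (2 * π) := by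
  rw [stdf_eq]
  rw [integral_gaussian]
  rw [show π / (1/2 : ℝ) = 2 * π by ring]

lemma gauss_Icc (μ v : ℝ) (hv : 0 < v) (l u : ℝ) (hlu : l ≤ u) :
    ((gaussianReal μ v.toNNReal) (Icc l u)).toReal
      = (1 / Real.sqrt (2 * π)) *
        ∫ t in ((l - μ) / Real.sqrt v)..((u - μ) / Real.sqrt v), Real.exp (-t ^ 2 / 2) := by
  have hvne : v.toNNReal ≠ 0 := by
    simp [Real.toNNReal_eq_zero, not_le, hv]
  have hcoe : ((v.toNNReal : ℝ)) = v := Real.coe_toNNReal _ hv.le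
  have hσ : 0 < Real.sqrt v := Real.sqrt_pos.mpr hv
  rw [gaussianReal_apply_eq_integral μ hvne,
    ENNReal.toReal_ofReal (integral_nonneg fun x => gaussianPDFReal_nonneg _ _ _)]
  rw [integral_Icc_eq_integral_Ioc, ← intervalIntegral.integral_of_le hlu]
  have hpdf : ∀ x, gaussianPDFReal μ v.toNNReal x
      = (Real.sqrt (2 * π))⁻¹ * ((Real.sqrt v)⁻¹ * Real.exp (-((x - μ) / Real.sqrt v) ^ 2 / 2)) := by
    intro x
    rw [gaussianPDFReal, hcoe]
    have he : -((x - μ) / Real.sqrt v) ^ 2 / 2 = -(x - μ) ^ 2 / (2 * v) := by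
      rw [div_pow, Real.sq_sqrt hv.le]; ring
    rw [he, show (2 : ℝ) * π * v = (2 * π) * v by ring,
      Real.sqrt_mul (by positivity), mul_inv, mul_assoc]
  simp_rw [hpdf]
  rw [intervalIntegral.integral_const_mul]
  have : (∫ x in l..u, (Real.sqrt v)⁻¹ * Real.exp (-((x - μ) / Real.sqrt v) ^ 2 / 2))
      = ∫ t in ((l - μ) / Real.sqrt v)..((u - μ) / Real.sqrt v), Real.exp (-t ^ 2 / 2) := by
    rw [intervalIntegral.integral_const_mul]
    have h1 : (∫ x in l..u, Real.exp (-((x - μ) / Real.sqrt v) ^ 2 / 2))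
        = ∫ x in (l - μ)..(u - μ), Real.exp (-(x / Real.sqrt v) ^ 2 / 2) :=
      intervalIntegral.integral_comp_sub_right (fun x => Real.exp (-(x / Real.sqrt v) ^ 2 / 2)) μ
    have h2 : (∫ x in (l - μ)..(u - μ), Real.exp (-(x / Real.sqrt v) ^ 2 / 2))
        = Real.sqrt v • ∫ t in ((l - μ) / Real.sqrt v)..((u - μ) / Real.sqrt v),
            Real.exp (-t ^ 2 / 2) :=
      intervalIntegral.integral_comp_div (f := fun t => Real.exp (-t ^ 2 / 2)) hσ.ne'
    rw [h1, h2, smul_eq_mul, ← mul_assoc, inv_mul_cancel₀ hσ.ne', one_mul]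
  rw [this, one_div]

lemma gaussQ_eval (a : ℝ) : gaussQ a = (1 / Real.sqrt (2 * π)) * ∫ t in Ioi a, Real.exp (-t ^ 2 / 2) := rfl

/-- Outage probability of the RIS-FD-SSK scheme under imperfect CSI: for a Gaussian
composite channel `X` with mean `μ = Nπ/4` and variance `σ² = N(32-π²)/16`,
`P(ρξ²X²/(ρ(1-ξ²)Nσ_e² + ρk² + 1) ≤ γ) = 1 - Q((√z - μ)/σ) - Q((√z + μ)/σ)`
with `z = ((ρ(1-ξ²)Nσ_e² + ρk² + 1)/(ρξ²))·γ`. -/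
theorem outage_probability (N ξ σe2 k2 ρ γ : ℝ) (hN : 0 < N) (hξ0 : 0 < ξ) (hξ1 : ξ ≤ 1)
    (hσe : 0 ≤ σe2) (hk : 0 ≤ k2) (hρ : 0 < ρ) (hγ : 0 < γ) :
    ((gaussianReal (N * π / 4) ((N * (32 - π ^ 2) / 16).toNNReal))
        {x : ℝ | ρ * ξ ^ 2 * x ^ 2 / (ρ * (1 - ξ ^ 2) * N * σe2 + ρ * k2 + 1) ≤ γ}).toReal
      = 1 - gaussQ ((Real.sqrt (((ρ * (1 - ξ ^ 2) * N * σe2 + ρ * k2 + 1) / (ρ * ξ ^ 2)) * γ)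
              - N * π / 4) / Real.sqrt (N * (32 - π ^ 2) / 16))
          - gaussQ ((Real.sqrt (((ρ * (1 - ξ ^ 2) * N * σe2 + ρ * k2 + 1) / (ρ * ξ ^ 2)) * γ)
              + N * π / 4) / Real.sqrt (N * (32 - π ^ 2) / 16)) := by
  set D : ℝ := ρ * (1 - ξ ^ 2) * N * σe2 + ρ * k2 + 1 with hD
  have hξsq : (0:ℝ) < ρ * ξ ^ 2 := by positivity
  have h1ξ : 0 ≤ 1 - ξ ^ 2 := by nlinarith
  have hDpos : 0 < D := by
    have : 0 ≤ ρ * (1 - ξ ^ 2) * N * σe2 := by positivity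
    have : 0 ≤ ρ * k2 := by positivity
    simp only [hD]; nlinarith
  set z : ℝ := (D / (ρ * ξ ^ 2)) * γ with hz
  have hzpos : 0 < z := mul_pos (div_pos hDpos hξsq) hγ
  set μ : ℝ := N * π / 4 with hμ
  set v : ℝ := N * (32 - π ^ 2) / 16 with hv
  have hπ : π ^ 2 < 32 := by nlinarith [Real.pi_le_four, Real.pi_pos]
  have hvpos : 0 < v := by
    rw [hv]; exact div_pos (mul_pos hN (by linarith)) (by norm_num)
  have hσ : 0 < Real.sqrt v := Real.sqrt_pos.mpr hvpos
  have hsz : 0 ≤ Real.sqrt z := Real.sqrt_nonneg z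
  -- set equality
  have hset : {x : ℝ | ρ * ξ ^ 2 * x ^ 2 / D ≤ γ} = Icc (-Real.sqrt z) (Real.sqrt z) := by
    ext x
    simp only [mem_setOf_eq, mem_Icc]
    rw [div_le_iff₀ hDpos]
    constructor
    · intro h
      have hx2 : x ^ 2 ≤ z := by
        rw [hz]; rw [div_mul_eq_mul_div, le_div_iff₀ hξsq]; nlinarith
      have := Real.sqrt_le_sqrt hx2
      rw [Real.sqrt_sq_eq_abs] at this
      exact abs_le.mp this
    · intro h
      have habs : |x| ≤ Real.sqrt z := abs_le.mpr h
      have hx2 : x ^ 2 ≤ z := by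
        calc x ^ 2 = |x| ^ 2 := (sq_abs x).symm
          _ ≤ Real.sqrt z ^ 2 := by gcongr
          _ = z := Real.sq_sqrt hzpos.le
      rw [hz] at hx2
      rw [div_mul_eq_mul_div, le_div_iff₀ hξsq] at hx2
      nlinarith
  rw [hset, gauss_Icc μ v hvpos _ _ (by linarith)]
  set a : ℝ := (Real.sqrt z - μ) / Real.sqrt v with ha
  set b : ℝ := (Real.sqrt z + μ) / Real.sqrt v with hb
  have hcb : (-Real.sqrt z - μ) / Real.sqrt v = -b := by rw [hb]; ring
  rw [hcb]
  rw [gaussQ_eval, gaussQ_eval]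
  -- symmetry for Q(b)
  have hsym : (∫ t in Ioi b, Real.exp (-t ^ 2 / 2)) = ∫ t in Iic (-b), Real.exp (-t ^ 2 / 2) := by
    have h := integral_comp_neg_Ioi b (fun t : ℝ => Real.exp (-t ^ 2 / 2))
    simpa using h
  have hItot : (∫ t in Iic a, Real.exp (-t ^ 2 / 2)) + (∫ t in Ioi a, Real.exp (-t ^ 2 / 2))
      = Real.sqrt (2 * π) := by
    rw [intervalIntegral.integral_Iic_add_Ioi integrable_stdf.integrableOn integrable_stdf.integrableOn,
      integral_stdf]
  have hdiff : (∫ t in (-b)..a, Real.exp (-t ^ 2 / 2))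
      = (∫ t in Iic a, Real.exp (-t ^ 2 / 2)) - (∫ t in Iic (-b), Real.exp (-t ^ 2 / 2)) :=
    (intervalIntegral.integral_Iic_sub_Iic integrable_stdf.integrableOn
      integrable_stdf.integrableOn).symm
  have hC : (0:ℝ) < Real.sqrt (2 * π) := Real.sqrt_pos.mpr (by positivity)
  rw [hdiff, hsym]
  have hICa : (∫ t in Iic a, Real.exp (-t ^ 2 / 2))
      = Real.sqrt (2 * π) - ∫ t in Ioi a, Real.exp (-t ^ 2 / 2) := by linarith
  rw [hICa, one_div]
  field_simp
end
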